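/- Efficiency of the Shapley value: for a cooperative game val : Finset(Fin n) → ℝ with val(∅) = 0, the sum over all players j of the Shapley value φ_j(val) = Σ_{S ⊆ {1..n}\{j}} |S|!(n−|S|−1)!/n! · (val(S ∪ {j}) − val(S)) equals val of the grand coalition {1,...,n}. -/

import Mathlib

/-!
Summing the marginal contributions `v (S ∪ {j}) - v S` over all players, a coalition `T` occurs
`|T|` times as `S ∪ {j}`, with weight `w(|T| - 1)`, and `n - |T|` times as `S`, with weight
`w(|T|)`, where `w(k) = k! (n - k - 1)! / n!`. Both total weights equal `1 / C(n, |T|)`, except that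
the first vanishes at `T = ∅` and the second at `T = univ`, so everything cancels except
`v univ - v ∅`.
-/

open Finset Nat

namespace Finset

variable {α M : Type*} [DecidableEq α] [AddCommMonoid M]

lemma sum_powerset_erase_insert (s : Finset α) {j : α} (hj : j ∈ s) (F : Finset α → M) :
    ∑ S ∈ (s.erase j).powerset, F (insert j S) = ∑ T ∈ s.powerset with j ∈ T, F T := by
  refine sum_nbij' (insert j) (·.erase j) ?_ ?_ ?_ ?_ (fun _ _ => rfl) <;> intro S hS <;>
    simp_all [subset_erase, insert_subset_iff, (erase_subset j S).trans]

lemma powerset_erase (s : Finset α) (j : α) :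
    (s.erase j).powerset = {T ∈ s.powerset | j ∉ T} := by
  ext T
  simp [subset_erase]

variable [Fintype α]

lemma sum_sum_powerset_erase_insert (F : Finset α → M) :
    ∑ j, ∑ S ∈ (univ.erase j).powerset, F (insert j S) = ∑ T, #T • F T := by
  simp_rw [sum_powerset_erase_insert _ (mem_univ _), powerset_univ]
  rw [sum_comm' (t' := univ) (s' := id) (by simp)]
  simp

lemma sum_sum_powerset_erase (F : Finset α → M) :
    ∑ j, ∑ S ∈ (univ.erase j).powerset, F S = ∑ T, (Fintype.card α - #T) • F T := by
  simp_rw [powerset_erase, powerset_univ]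
  rw [sum_comm' (t' := univ) (s' := compl) (by simp)]
  simp [card_compl]

end Finset

noncomputable def shapleyWeight (n k : ℕ) : ℝ := (k ! * (n - k - 1)! : ℝ) / n !

lemma mul_shapleyWeight_pred {n k : ℕ} (hk₀ : 0 < k) (hk : k ≤ n) :
    k * shapleyWeight n (k - 1) = (n.choose k : ℝ)⁻¹ := by
  have hsub : n - (k - 1) - 1 = n - k := by omega
  rw [shapleyWeight, cast_choose ℝ hk, hsub, inv_div, ← mul_div_assoc, ← mul_assoc]
  congr 2
  exact_mod_cast Nat.mul_factorial_pred hk₀.ne'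

lemma sub_mul_shapleyWeight {n k : ℕ} (hk : k < n) :
    ((n - k : ℕ) : ℝ) * shapleyWeight n k = (n.choose k : ℝ)⁻¹ := by
  rw [shapleyWeight, cast_choose ℝ hk.le, inv_div, ← mul_div_assoc, mul_left_comm]
  congr 2
  exact_mod_cast Nat.mul_factorial_pred (Nat.sub_ne_zero_of_lt hk)

section Shapley

variable {α : Type*} [Fintype α] [DecidableEq α]

noncomputable def shapleyValue (v : Finset α → ℝ) (j : α) : ℝ :=
  ∑ S ∈ (univ.erase j).powerset, shapleyWeight (Fintype.card α) #S * (v (insert j S) - v S)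

lemma sum_sum_shapleyWeight_mul_insert (v : Finset α → ℝ) :
    ∑ j, ∑ S ∈ (univ.erase j).powerset, shapleyWeight (Fintype.card α) #S * v (insert j S) =
      ∑ T ∈ univ.erase ∅, ((Fintype.card α).choose #T : ℝ)⁻¹ * v T := calc
  _ = ∑ j, ∑ S ∈ (univ.erase j).powerset,
        shapleyWeight (Fintype.card α) (#(insert j S) - 1) * v (insert j S) := by
    refine sum_congr rfl fun j _ => sum_congr rfl fun S hS => ?_
    rw [card_insert_of_notMem (by simpa [subset_erase] using hS), Nat.add_sub_cancel]
  _ = ∑ T, #T • (shapleyWeight (Fintype.card α) (#T - 1) * v T) :=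
    sum_sum_powerset_erase_insert fun T => shapleyWeight (Fintype.card α) (#T - 1) * v T
  _ = ∑ T ∈ univ.erase ∅, #T • (shapleyWeight (Fintype.card α) (#T - 1) * v T) :=
    (sum_erase _ (by simp)).symm
  _ = _ := sum_congr rfl fun T hT => by
    rw [nsmul_eq_mul, ← mul_assoc, mul_shapleyWeight_pred
      (card_pos.2 (nonempty_of_ne_empty (ne_of_mem_erase hT))) (card_le_univ T)]

lemma sum_sum_shapleyWeight_mul (v : Finset α → ℝ) :
    ∑ j, ∑ S ∈ (univ.erase j).powerset, shapleyWeight (Fintype.card α) #S * v S =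
      ∑ T ∈ univ.erase univ, ((Fintype.card α).choose #T : ℝ)⁻¹ * v T := by
  rw [sum_sum_powerset_erase, ← sum_erase (a := univ) _ (by simp)]
  refine sum_congr rfl fun T hT => ?_
  rw [nsmul_eq_mul, ← mul_assoc,
    sub_mul_shapleyWeight ((card_lt_iff_ne_univ T).2 (ne_of_mem_erase hT))]

theorem sum_shapleyValue (v : Finset α → ℝ) : ∑ j, shapleyValue v j = v univ - v ∅ := by
  simp only [shapleyValue, mul_sub, sum_sub_distrib, sum_sum_shapleyWeight_mul_insert,
    sum_sum_shapleyWeight_mul]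
  rw [sum_erase_eq_sub (mem_univ _), sum_erase_eq_sub (mem_univ _), sub_sub_sub_cancel_left]
  simp

end Shapley

theorem shapley_efficiency (n : ℕ) (val : Finset (Fin n) → ℝ) (h0 : val ∅ = 0) :
    ∑ j : Fin n,
        ∑ S ∈ ((Finset.univ : Finset (Fin n)).erase j).powerset,
          ((S.card.factorial * (n - S.card - 1).factorial : ℝ) / (n.factorial : ℝ)) *
            (val (insert j S) - val S) =
      val (Finset.univ : Finset (Fin n)) := by
  have h := sum_shapleyValue val
  simp only [shapleyValue, shapleyWeight, Fintype.card_fin, h0, sub_zero] at h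
  exact h
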